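/- arXiv:2303.15285 — 4 statements merged into one kernel-verified Lean document; each statement's English description precedes it below -/
import Mathlib

section
/- If a set A ⊆ ℕ is creative, then every recursively enumerable set B many-one reduces to A: there exists a computable function f : ℕ → ℕ such that for all n, n ∈ B if and only if f(n) ∈ A. -/
/-!
Let `p` be a productive function for `Aᶜ`. By the recursion theorem with parameters there is a
computable `g` with `W_{g n} = {p (g n)}` if `n ∈ B` and `W_{g n} = ∅` otherwise; then
`f := p ∘ g` reduces `B` to `A`. If `n ∉ B`, then `W_{g n} ⊆ Aᶜ`, so `f n ∈ Aᶜ`. If `n ∈ B` and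
`f n ∉ A`, then again `W_{g n} = {f n} ⊆ Aᶜ`, so productivity puts `f n` outside `W_{g n}`,
which is absurd.
-/

/-- The `i`-th recursively enumerable set in the standard numbering. -/
def Wre (i : ℕ) : Set ℕ := {x | ((Denumerable.ofNat Nat.Partrec.Code i).eval x).Dom}

/-- `A` is productive. -/
def Productive (A : Set ℕ) : Prop :=
  ∃ f : ℕ → ℕ, Computable f ∧ ∀ i : ℕ, Wre i ⊆ A → f i ∈ A \ Wre i

/-- `A` is creative: `A` is r.e. and its complement is productive. -/
def Creative (A : Set ℕ) : Prop := REPred (· ∈ A) ∧ Productive Aᶜ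

open Nat.Partrec (Code)
open Nat.Partrec.Code

theorem REPred.and {α : Type*} [Primcodable α] {p q : α → Prop} (hp : REPred p)
    (hq : REPred q) : REPred fun a => p a ∧ q a :=
  (Partrec.bind hp (hq.comp Computable.fst).to₂).dom_re.of_eq fun a => by
    simp [Part.bind_dom, Part.assert]

theorem exists_computable_wre_fixed_point {R : ℕ → ℕ → ℕ → Prop}
    (hR : REPred fun t : ℕ × ℕ × ℕ => R t.1 t.2.1 t.2.2) :
    ∃ g : ℕ → ℕ, Computable g ∧ ∀ n, Wre (g n) = {x | R (g n) n x} := by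
  let index (c : Code) (n : ℕ) : ℕ := Encodable.encode (curry c n)
  have hindex : Computable₂ index := (Primrec.encode.comp primrec₂_curry).to_comp
  let F (c : Code) (z : ℕ) : Part ℕ :=
    (Part.assert (R (index c z.unpair.1) z.unpair.1 z.unpair.2) fun _ => Part.some ()).map
      fun _ => 0
  have hF : Partrec₂ F := by
    have hz : Computable fun q : Code × ℕ => q.2.unpair :=
      Primrec.unpair.to_comp.comp Computable.snd
    have hRz : REPred fun q : Code × ℕ => R (index q.1 q.2.unpair.1) q.2.unpair.1 q.2.unpair.2 :=
      hR.comp (g := fun q : Code × ℕ => (index q.1 q.2.unpair.1, q.2.unpair.1, q.2.unpair.2))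
        ((hindex.comp Computable.fst (Computable.fst.comp hz)).pair
          ((Computable.fst.comp hz).pair (Computable.snd.comp hz)))
    exact hRz.map (Computable.const 0).to₂
  -- Kleene's recursion theorem: `c` may consult its own indices `index c n`.
  obtain ⟨c, hc⟩ := fixed_point₂ hF
  refine ⟨index c, hindex.comp (Computable.const c) Computable.id, fun n => ?_⟩
  ext x
  simp [Wre, index, hc, F, Part.assert]

theorem mem_iff_not_of_wre_eq {P : Set ℕ} {p : ℕ → ℕ}
    (hp : ∀ i, Wre i ⊆ P → p i ∈ P \ Wre i) {i : ℕ} {Q : Prop}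
    (hi : Wre i = {x | Q ∧ x = p i}) : p i ∈ P ↔ ¬Q := by
  constructor
  · intro hpi hQ
    have hsub : Wre i ⊆ P := by rw [hi]; rintro x ⟨-, rfl⟩; exact hpi
    exact (hp i hsub).2 (by rw [hi]; exact ⟨hQ, rfl⟩)
  · intro hQ
    have hsub : Wre i ⊆ P := by rw [hi]; rintro x ⟨hQ', -⟩; exact absurd hQ' hQ
    exact (hp i hsub).1

/-- Every r.e. set many-one reduces to a creative set. -/
theorem creative_many_one_complete (A : Set ℕ) (h : Creative A)
    (B : Set ℕ) (hB : REPred (· ∈ B)) :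
    ∃ f : ℕ → ℕ, Computable f ∧ ∀ n, n ∈ B ↔ f n ∈ A := by
  obtain ⟨-, p, hp, hprod⟩ := h
  have hB' : REPred fun t : ℕ × ℕ × ℕ => t.2.1 ∈ B :=
    hB.comp (Computable.fst.comp Computable.snd)
  have hR : REPred fun t : ℕ × ℕ × ℕ => t.2.1 ∈ B ∧ t.2.2 = p t.1 :=
    hB'.and <| ComputablePred.to_re <|
      (Primrec.eq.decide.to_comp.comp (Computable.snd.comp Computable.snd)
        (hp.comp Computable.fst)).computablePred.of_eq fun _ => by simp
  obtain ⟨g, hg, hW⟩ :=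
    exists_computable_wre_fixed_point (R := fun i n x => n ∈ B ∧ x = p i) hR
  refine ⟨p ∘ g, hp.comp hg, fun n => ?_⟩
  exact (not_iff_not.1 (mem_iff_not_of_wre_eq hprod (hW n))).symm
end

section
/- If (A,B) is a disjoint pair of c.e. sets and every disjoint pair of c.e. sets is semi-reducible to (A,B), then (A,B) is effectively inseparable. -/
/-- A disjoint pair `(A, B)` is effectively inseparable. -/
def EIPair (A B : Set ℕ) : Prop :=
  ∃ t : ℕ → ℕ → ℕ, Computable₂ t ∧
    ∀ i j : ℕ, A ⊆ Wre i → B ⊆ Wre j → Wre i ∩ Wre j = ∅ → t i j ∉ Wre i ∪ Wre j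

open Nat.Partrec (Code)

section

variable {α : Type*} [Primcodable α]

theorem Partrec.rePred_mem {σ : Type*} [Primcodable σ] [DecidableEq σ] {k : α →. σ}
    (hk : Partrec k) (b : σ) : REPred fun a => b ∈ k a := by
  have hb : REPred fun c : σ => c = b :=
    (PrimrecPred.computablePred (Primrec.eq.comp Primrec.id (Primrec.const b))).to_re
  refine (hk.bind (hb.comp Computable.snd).to₂).dom_re.of_eq fun a => ?_
  simp [Part.dom_iff_mem, eq_comm]

theorem REPred.reduction {p q : α → Prop} (hp : REPred p) (hq : REPred q) :
    ∃ p' q' : α → Prop, REPred p' ∧ REPred q' ∧ (∀ a, p' a → p a) ∧ (∀ a, q' a → q a) ∧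
      (∀ a, ¬(p' a ∧ q' a)) ∧ ∀ a, p a ∨ q a → p' a ∨ q' a := by
  obtain ⟨k, hk, H⟩ :=
    Partrec.merge' (hp.map (Computable.const true).to₂) (hq.map (Computable.const false).to₂)
  have hmem (a : α) (x : Bool) (hx : x ∈ k a) : p a ∧ x = true ∨ q a ∧ x = false := by
    simpa [eq_comm] using (H a).1 x hx
  refine ⟨fun a => true ∈ k a, fun a => false ∈ k a, hk.rePred_mem true, hk.rePred_mem false,
    fun a ha => ?_, fun a ha => ?_, fun a ⟨ht, hf⟩ => ?_, fun a hpq => ?_⟩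
  · simpa using hmem a _ ha
  · simpa using hmem a _ ha
  · exact Bool.false_ne_true (Part.mem_unique hf ht)
  · have hdom : (k a).Dom := (H a).2.2 (hpq.imp (⟨·, trivial⟩) (⟨·, trivial⟩))
    cases hx : (k a).get hdom
    · exact .inr (hx ▸ Part.get_mem hdom)
    · exact .inl (hx ▸ Part.get_mem hdom)

theorem rePred_mem_Wre {f g : α → ℕ} (hf : Computable f) (hg : Computable g) :
    REPred fun a => f a ∈ Wre (g a) :=
  (Nat.Partrec.Code.eval_part.comp ((Computable.ofNat Code).comp hg) hf).dom_re

end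

theorem exists_computable_Wre_preimage {f : ℕ → ℕ} (hf : Computable f) :
    ∃ pre : ℕ → ℕ, Computable pre ∧ ∀ i, Wre (pre i) = f ⁻¹' Wre i := by
  obtain ⟨cf, hcf⟩ := Nat.Partrec.Code.exists_code.1 (Partrec.nat_iff.1 hf)
  refine ⟨fun i => Encodable.encode ((Denumerable.ofNat Code i).comp cf),
    (Primrec.encode.comp (Nat.Partrec.Code.primrec₂_comp.comp (Primrec.ofNat Code)
      (Primrec.const cf))).to_comp, fun i => Set.ext fun x => ?_⟩
  simp only [Wre, Denumerable.ofNat_encode, Nat.Partrec.Code.eval, hcf]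
  exact ⟨fun ⟨_, h⟩ => h, fun h => ⟨trivial, h⟩⟩

theorem semi_complete_pair_is_ei_general (A B : Set ℕ)
    (h : ∀ C D : Set ℕ, REPred (· ∈ C) → REPred (· ∈ D) → C ∩ D = ∅ →
      ∃ f : ℕ → ℕ, Computable f ∧ (∀ x ∈ C, f x ∈ A) ∧ (∀ x ∈ D, f x ∈ B)) :
    EIPair A B := by
  obtain ⟨D, C, hD, hC, hDsub, hCsub, hCD, hcover⟩ := REPred.reduction
    (rePred_mem_Wre Computable.id (Computable.fst.comp Computable.unpair))
    (rePred_mem_Wre Computable.id (Computable.snd.comp Computable.unpair))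
  obtain ⟨f, hf, hfC, hfD⟩ := h {n | C n} {n | D n} hC hD
    (Set.eq_empty_of_forall_notMem fun n hn => hCD n hn.symm)
  obtain ⟨pre, hpre, hWpre⟩ := exists_computable_Wre_preimage hf
  refine ⟨fun i j => f (Nat.pair (pre i) (pre j)),
    hf.comp (Computable₂.comp Primrec₂.natPair.to_comp (hpre.comp .fst) (hpre.comp .snd)), ?_⟩
  intro i j hAi hBj hij hmem
  set n := Nat.pair (pre i) (pre j)
  have hpre_mem (k : ℕ) : n ∈ Wre (pre k) ↔ f n ∈ Wre k := by rw [hWpre]; rfl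
  refine Set.eq_empty_iff_forall_notMem.1 hij (f n) ?_
  rcases hcover n (by simpa [n, hpre_mem] using hmem) with hDn | hCn
  · exact ⟨(hpre_mem i).1 (by simpa [n] using hDsub n hDn), hBj (hfD n hDn)⟩
  · exact ⟨hAi (hfC n hCn), (hpre_mem j).1 (by simpa [n] using hCsub n hCn)⟩

/-- If every disjoint pair of c.e. sets is semi-reducible to `(A, B)`, then
`(A, B)` is effectively inseparable. -/
theorem semi_complete_pair_is_ei (A B : Set ℕ)
    (hA : REPred (· ∈ A)) (hB : REPred (· ∈ B)) (hAB : A ∩ B = ∅)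
    (h : ∀ C D : Set ℕ, REPred (· ∈ C) → REPred (· ∈ D) → C ∩ D = ∅ →
      ∃ f : ℕ → ℕ, Computable f ∧ (∀ x ∈ C, f x ∈ A) ∧ (∀ x ∈ D, f x ∈ B)) :
    EIPair A B :=
  semi_complete_pair_is_ei_general A B h
end

section
/- If both components of an effectively inseparable pair are considered, then each component is creative; i.e., if (A,B) is an effectively inseparable disjoint pair of c.e. sets, then A is creative (and by symmetry so is B). -/
/-!
Let `A = W_a`. By s-m-n there is a computable `g` with `W_{g i} = W_i ∪ B`. If `W_i` is disjoint
from `A`, then `(W_a, W_{g i})` separates `(A, B)`, so `t a (g i)` lies outside `A ∪ W_i ∪ B`;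
hence `i ↦ t a (g i)` is a productive function for the complement of `A`.
-/

theorem REPred.or {α : Type*} [Primcodable α] {p q : α → Prop} (hp : REPred p) (hq : REPred q) :
    REPred fun a => p a ∨ q a := by
  obtain ⟨k, hk, hdom⟩ := Partrec.merge' hp hq
  exact hk.dom_re.of_eq fun a => by simpa [Part.assert] using (hdom a).2

theorem rePred_mem_wre : REPred fun p : ℕ × ℕ => p.2 ∈ Wre p.1 :=
  (Nat.Partrec.Code.eval_part.comp ((Computable.ofNat _).comp Computable.fst)
    Computable.snd).dom_re

theorem exists_computable_wre_eq {R : ℕ → Set ℕ} (hR : REPred fun p : ℕ × ℕ => p.2 ∈ R p.1) :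
    ∃ g : ℕ → ℕ, Computable g ∧ ∀ i, Wre (g i) = R i := by
  have hf : Partrec fun n : ℕ =>
      (Part.assert (n.unpair.2 ∈ R n.unpair.1) fun _ => Part.some ()).map fun _ => (0 : ℕ) :=
    (hR.comp Computable.unpair).map ((Computable.const 0).comp Computable.fst).to₂
  obtain ⟨c, hc⟩ := Nat.Partrec.Code.exists_code.1 (Partrec.nat_iff.1 hf)
  refine ⟨fun i => Encodable.encode (Nat.Partrec.Code.curry c i),
    Computable.encode.comp ((Nat.Partrec.Code.primrec₂_curry.to_comp).comp
      (Computable.const c) Computable.id), fun i => ?_⟩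
  ext x
  simp [Wre, Nat.Partrec.Code.eval_curry, hc, Part.assert]

theorem exists_wre_eq_of_rePred {A : Set ℕ} (hA : REPred (· ∈ A)) : ∃ a, Wre a = A :=
  let ⟨g, _, hg⟩ := exists_computable_wre_eq (R := fun _ => A) (hA.comp Computable.snd)
  ⟨g 0, hg 0⟩

/-- Each component of an effectively inseparable disjoint pair of c.e. sets is
creative. -/
theorem ei_pair_first_component_creative (A B : Set ℕ)
    (hA : REPred (· ∈ A)) (hB : REPred (· ∈ B)) (hAB : A ∩ B = ∅)
    (hEI : EIPair A B) : Creative A := by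
  obtain ⟨a, ha⟩ := exists_wre_eq_of_rePred hA
  obtain ⟨g, hg, hWg⟩ := exists_computable_wre_eq (R := fun i => Wre i ∪ B)
    (rePred_mem_wre.or (hB.comp Computable.snd))
  obtain ⟨t, ht, hsep⟩ := hEI
  refine ⟨hA, fun i => t a (g i), ht.comp (Computable.const a) hg, fun i hi => ?_⟩
  have hdisj : Wre a ∩ Wre (g i) = ∅ := by
    rw [ha, hWg, Set.inter_union_distrib_left, hAB, Set.union_empty, Set.inter_comm,
      Set.disjoint_iff_inter_eq_empty.1 (Set.subset_compl_iff_disjoint_right.1 hi)]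
  have hout := hsep a (g i) ha.ge (hWg i ▸ Set.subset_union_right) hdisj
  rw [ha, hWg] at hout
  exact ⟨fun h => hout (Or.inl h), fun h => hout (Or.inr (Or.inl h))⟩
end

section
/- In any consistent first-order extension S (in the same language) of the theory Succ⁻ of a successor function, a subset X ⊆ ℕ is weakly representable in S if and only if X is finite or cofinite. -/
open FirstOrder Language

/-- Functions of the language of a successor: a constant `0` and a unary `S`. -/
inductive SuccFn : ℕ → Type
  | zero : SuccFn 0
  | succ : SuccFn 1

/-- The first-order language with a constant `0` and a unary function `S`. -/
def succLang : Language := ⟨SuccFn, fun _ => Empty⟩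

def zeroC : succLang.Constants := SuccFn.zero
def succF : succLang.Functions 1 := SuccFn.succ

/-- The numeral `n̄ = Sⁿ0`. -/
def numeral : ℕ → succLang.Term Empty
  | 0 => zeroC.term
  | n + 1 => succF.apply₁ (numeral n)

/-- S1 : S is injective. -/
def axS1 : succLang.Sentence :=
  BoundedFormula.all (BoundedFormula.all
    ((Term.bdEqual (succF.apply₁ (&0)) (succF.apply₁ (&1))).imp (Term.bdEqual (&0) (&1))))

/-- S2 : `S x ≠ 0`. -/
def axS2 : succLang.Sentence :=
  BoundedFormula.all (BoundedFormula.not (Term.bdEqual (succF.apply₁ (&0)) zeroC.term))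

/-- S3 : every nonzero element is a successor. -/
def axS3 : succLang.Sentence :=
  BoundedFormula.all ((BoundedFormula.not (Term.bdEqual (&0) zeroC.term)).imp
    (BoundedFormula.ex (Term.bdEqual (&0) (succF.apply₁ (&1)))))

/-- The theory `Succ⁻`. -/
def SuccMinus : succLang.Theory := {axS1, axS2, axS3}

/-- `X ⊆ ℕ` is weakly representable in `T`. -/
def WeaklyRep (T : succLang.Theory) (X : Set ℕ) : Prop :=
  ∃ φ : succLang.Formula (Fin 1),
    ∀ n : ℕ, n ∈ X ↔ T ⊨ᵇ (φ.subst fun _ => numeral n)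

/-!
If `X` is neither finite nor cofinite, then for infinitely many `n` some model of `S` satisfies
`φ(n̄) ∧ ¬φ(S n̄)`; an ultraproduct of these models is a model of `S` with a nonstandard element
`c` such that `φ(c) ∧ ¬φ(S c)`. But in a model of `Succ⁻` the map that is `S` on the `S`-orbit
(a `ℤ`-chain or a cycle) of a nonstandard `c` and the identity elsewhere is an automorphism sending
`c` to `S c`, so `φ(c) ↔ φ(S c)`. Conversely, since numerals are pairwise distinct in every model,
a finite `X` is weakly represented by `⋁_{m ∈ X} x = m̄` and a cofinite one by the negation of the
formula for its complement.
-/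

open Structure

namespace SuccTheory

section Function

variable {α : Type*} {f : α → α}

def component (f : α → α) (c : α) : Set α := {x | ∃ k l : ℕ, f^[k] x = f^[l] c}

theorem eq_iterate_of_iterate_eq (hf : f.Injective) {x y : α} {k l : ℕ}
    (h : f^[k] x = f^[k + l] y) : x = f^[l] y :=
  hf.iterate k (by rwa [← Function.iterate_add_apply])

theorem apply_mem_component_iff {c x : α} : f x ∈ component f c ↔ x ∈ component f c := by
  constructor
  · rintro ⟨k, l, h⟩
    exact ⟨k + 1, l, by rwa [Function.iterate_succ_apply]⟩
  · rintro ⟨k, l, h⟩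
    exact ⟨k, l + 1, by rw [← Function.iterate_succ_apply, Function.iterate_succ_apply', h,
      Function.iterate_succ_apply']⟩

variable {C : Set α} [DecidablePred (· ∈ C)]

theorem piecewise_apply_comm (hC : ∀ x, f x ∈ C ↔ x ∈ C) (x : α) :
    C.piecewise f id (f x) = f (C.piecewise f id x) := by
  by_cases hx : x ∈ C
  · rw [Set.piecewise_eq_of_mem _ _ _ ((hC x).2 hx), Set.piecewise_eq_of_mem _ _ _ hx]
  · rw [Set.piecewise_eq_of_notMem _ _ _ (mt (hC x).1 hx), Set.piecewise_eq_of_notMem _ _ _ hx]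
    rfl

theorem bijective_piecewise_id (hf : f.Injective) (hC : ∀ x, f x ∈ C ↔ x ∈ C)
    (hCf : C ⊆ Set.range f) : (C.piecewise f id).Bijective := by
  refine ⟨fun x y hxy => ?_, fun y => ?_⟩
  · by_cases hx : x ∈ C <;> by_cases hy : y ∈ C <;>
      simp only [Set.piecewise_eq_of_mem, Set.piecewise_eq_of_notMem, hx, hy, id,
        not_false_eq_true] at hxy
    · exact hf hxy
    · exact absurd (hxy ▸ (hC x).2 hx) hy
    · exact absurd (hxy ▸ (hC y).2 hy) hx
    · exact hxy
  · by_cases hy : y ∈ C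
    · obtain ⟨x, rfl⟩ := hCf hy
      exact ⟨x, Set.piecewise_eq_of_mem _ _ _ ((hC x).1 hy)⟩
    · exact ⟨y, Set.piecewise_eq_of_notMem _ _ _ hy⟩

end Function

section Structure

variable {M : Type*} [succLang.Structure M]

def zeroM : M := funMap zeroC default

def succM (x : M) : M := funMap succF ![x]

theorem funMap_zeroC (x : Fin 0 → M) : funMap zeroC x = (zeroM : M) :=
  congrArg _ (Subsingleton.elim _ _)

theorem funMap_succF (x : Fin 1 → M) : funMap succF x = succM (x 0) :=
  congrArg _ (funext fun i => by fin_cases i; rfl)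

theorem realize_numeral (n : ℕ) (v : Empty → M) : (numeral n).realize v = succM^[n] zeroM := by
  induction n with
  | zero => exact funMap_zeroC _
  | succ n ih =>
    rw [numeral, Term.realize_functions_apply₁, funMap_succF, Function.iterate_succ_apply']
    exact congrArg succM ih

theorem realize_subst_numeral (φ : succLang.Formula (Fin 1)) (n : ℕ) :
    M ⊨ φ.subst (fun _ => numeral n) ↔ φ.Realize fun _ => (succM^[n] zeroM : M) := by
  simp only [Sentence.Realize, Formula.Realize, BoundedFormula.realize_subst, realize_numeral]

def eqNum (m : ℕ) : succLang.Formula (Fin 1) :=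
  Term.equal (Term.var 0) ((numeral m).relabel Empty.elim)

theorem realize_eqNum (m : ℕ) (v : Fin 1 → M) : (eqNum m).Realize v ↔ v 0 = succM^[m] zeroM := by
  simp only [eqNum, Formula.realize_equal, Term.realize_var, Term.realize_relabel,
    realize_numeral]

def boundaryFormula (φ : succLang.Formula (Fin 1)) : succLang.Formula (Fin 1) :=
  φ ⊓ (φ.subst fun _ => succF.apply₁ (Term.var 0)).not

theorem realize_boundaryFormula (φ : succLang.Formula (Fin 1)) (x : M) :
    ((boundaryFormula φ).Realize fun _ => x) ↔
      (φ.Realize fun _ => x) ∧ ¬φ.Realize fun _ => succM x := by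
  simp only [boundaryFormula, Formula.Realize, BoundedFormula.realize_inf,
    BoundedFormula.realize_not, BoundedFormula.realize_subst, Term.realize_functions_apply₁,
    Term.realize_var, funMap_succF, Matrix.cons_val_zero]

def equivOfCommute (e : M ≃ M) (h0 : e zeroM = zeroM) (hs : ∀ x, e (succM x) = succM (e x)) :
    M ≃[succLang] M where
  toEquiv := e
  map_fun' := by
    rintro _ (_ | _) x
    · exact (congrArg e (funMap_zeroC x)).trans (h0.trans (funMap_zeroC _).symm)
    · exact (congrArg e (funMap_succF x)).trans ((hs _).trans (funMap_succF (e ∘ x)).symm)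
  map_rel' := fun r => r.elim

end Structure

section Model

variable {M : Type*} [succLang.Structure M] [M ⊨ SuccMinus]

theorem succM_injective : (succM : M → M).Injective := by
  have h := Theory.realize_sentence_of_mem (M := M) SuccMinus (by simp [SuccMinus] : axS1 ∈ _)
  simp [axS1, Sentence.Realize, Formula.Realize, Fin.snoc] at h
  exact fun x y => h x y

theorem succM_ne_zeroM (x : M) : succM x ≠ zeroM := by
  have h := Theory.realize_sentence_of_mem (M := M) SuccMinus (by simp [SuccMinus] : axS2 ∈ _)
  simp [axS2, Sentence.Realize, Formula.Realize, Fin.snoc] at h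
  exact h x

theorem exists_eq_succM_of_ne_zeroM {x : M} (hx : x ≠ zeroM) : ∃ y, x = succM y := by
  have h := Theory.realize_sentence_of_mem (M := M) SuccMinus (by simp [SuccMinus] : axS3 ∈ _)
  simp [axS3, Sentence.Realize, Formula.Realize, Fin.snoc] at h
  exact h x hx

theorem zeroM_ne_iterate_succM (x : M) {d : ℕ} (hd : d ≠ 0) : zeroM ≠ succM^[d] x := by
  obtain ⟨d, rfl⟩ := Nat.exists_eq_succ_of_ne_zero hd
  rw [Function.iterate_succ_apply']
  exact (succM_ne_zeroM _).symm

theorem iterate_succM_zeroM_injective : (fun n : ℕ => (succM^[n] zeroM : M)).Injective := by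
  suffices h : ∀ n d, (succM^[n] zeroM : M) = succM^[n + d] zeroM → d = 0 by
    intro n m hnm
    rcases le_total n m with hle | hle
    · obtain ⟨d, rfl⟩ := Nat.exists_eq_add_of_le hle
      simp [h n d hnm]
    · obtain ⟨d, rfl⟩ := Nat.exists_eq_add_of_le hle
      simp [h m d hnm.symm]
  intro n d h
  by_contra hd
  exact zeroM_ne_iterate_succM _ hd (eq_iterate_of_iterate_eq succM_injective h)

variable {c : M} (hc : ∀ n, c ≠ succM^[n] zeroM)
include hc

theorem zeroM_notMem_component : zeroM ∉ component succM c := by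
  rintro ⟨k, l, h⟩
  rcases le_total l k with hle | hle
  · obtain ⟨d, rfl⟩ := Nat.exists_eq_add_of_le hle
    exact hc d (eq_iterate_of_iterate_eq succM_injective h.symm)
  · obtain ⟨d, rfl⟩ := Nat.exists_eq_add_of_le hle
    rcases eq_or_ne d 0 with rfl | hd
    · exact hc 0 (succM_injective.iterate k h).symm
    · exact zeroM_ne_iterate_succM c hd (eq_iterate_of_iterate_eq succM_injective h)

theorem component_subset_range_succM : component succM c ⊆ Set.range succM := fun _ hx =>
  (exists_eq_succM_of_ne_zeroM (ne_of_mem_of_not_mem hx (zeroM_notMem_component hc))).imp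
    fun _ => Eq.symm

theorem exists_equiv_apply_eq_succM : ∃ g : M ≃[succLang] M, g c = succM c := by
  classical
  have hC : ∀ x, succM x ∈ component succM c ↔ x ∈ component succM c :=
    fun _ => apply_mem_component_iff
  refine ⟨equivOfCommute (Equiv.ofBijective _ (bijective_piecewise_id succM_injective hC
    (component_subset_range_succM hc))) (Set.piecewise_eq_of_notMem _ _ _
      (zeroM_notMem_component hc)) (piecewise_apply_comm hC), ?_⟩
  exact Set.piecewise_eq_of_mem (component succM c) _ _ ⟨0, 0, rfl⟩

theorem realize_succM_iff_of_nonstandard (φ : succLang.Formula (Fin 1)) :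
    (φ.Realize fun _ => succM c) ↔ φ.Realize fun _ => c := by
  obtain ⟨g, hg⟩ := exists_equiv_apply_eq_succM hc
  rw [← hg]
  exact StrongHomClass.realize_formula g φ

end Model

theorem infinite_setOf_mem_and_add_one_notMem {X : Set ℕ} (hX : X.Infinite) (hXc : Xᶜ.Infinite) :
    {n | n ∈ X ∧ n + 1 ∉ X}.Infinite := by
  refine Set.infinite_of_forall_exists_gt fun N => ?_
  obtain ⟨a, haX, hNa⟩ := hX.exists_gt N
  by_contra! hB
  have hX_ge : ∀ n, a ≤ n → n ∈ X := Nat.le_induction haX fun n hn hnX =>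
    by_contra fun hn1 => (hB n ⟨hnX, hn1⟩).not_gt (hNa.trans_le hn)
  exact hXc ((Set.finite_lt_nat a).subset fun n hn => not_le.1 (mt (hX_ge n) hn))

section Theory

variable {S : succLang.Theory}

theorem model_succMinus (hext : SuccMinus ⊆ S) (M : S.ModelType) : M ⊨ SuccMinus :=
  Theory.Model.mono inferInstance hext

theorem models_subst_numeral_iff (φ : succLang.Formula (Fin 1)) (n : ℕ) :
    S ⊨ᵇ φ.subst (fun _ => numeral n) ↔
      ∀ M : Theory.ModelType.{0, 0, 0} S, φ.Realize fun _ => (succM^[n] zeroM : M) := by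
  simp only [Theory.models_sentence_iff, realize_subst_numeral]

theorem weaklyRep_and_compl_of_realize_iff (hS : S.IsSatisfiable) (ψ : succLang.Formula (Fin 1))
    (X : Set ℕ) (h : ∀ (M : Theory.ModelType.{0, 0, 0} S) n,
      (ψ.Realize fun _ => (succM^[n] zeroM : M)) ↔ n ∈ X) :
    WeaklyRep S X ∧ WeaklyRep S Xᶜ := by
  obtain ⟨M⟩ := hS
  refine ⟨⟨ψ, fun n => ?_⟩, ⟨ψ.not, fun n => ?_⟩⟩
  · rw [models_subst_numeral_iff]
    exact ⟨fun hn N => (h N n).2 hn, fun hM => (h M n).1 (hM M)⟩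
  · rw [models_subst_numeral_iff]
    simp only [Formula.realize_not, h, Set.mem_compl_iff]
    exact ⟨fun hn _ => hn, fun hM => hM M⟩

theorem weaklyRep_and_compl_of_finite (hS : S.IsSatisfiable) (hext : SuccMinus ⊆ S) {X : Set ℕ}
    (hX : X.Finite) : WeaklyRep S X ∧ WeaklyRep S Xᶜ := by
  have := hX.to_subtype
  refine weaklyRep_and_compl_of_realize_iff hS (Formula.iSup fun m : X => eqNum m) X fun M n => ?_
  have := model_succMinus hext M
  simp [realize_eqNum, iterate_succM_zeroM_injective.eq_iff]

theorem weaklyRep_of_finite_or_compl_finite (hS : S.IsSatisfiable) (hext : SuccMinus ⊆ S)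
    {X : Set ℕ} : X.Finite ∨ Xᶜ.Finite → WeaklyRep S X
  | .inl hX => (weaklyRep_and_compl_of_finite hS hext hX).1
  | .inr hX => compl_compl X ▸ (weaklyRep_and_compl_of_finite hS hext hX).2

theorem exists_nonstandard_realize (hext : SuccMinus ⊆ S) (ψ : succLang.Formula (Fin 1))
    (hψ : {n | ∃ M : Theory.ModelType.{0, 0, 0} S,
      ψ.Realize fun _ => (succM^[n] zeroM : M)}.Infinite) :
    ∃ (M : Theory.ModelType.{0, 0, 0} S) (c : M),
      (∀ n, c ≠ succM^[n] zeroM) ∧ ψ.Realize fun _ => c := by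
  set B := {n | ∃ M : Theory.ModelType.{0, 0, 0} S, ψ.Realize fun _ => (succM^[n] zeroM : M)}
  have := hψ.to_subtype
  choose M hM using fun b : B => b.2
  have := fun b => model_succMinus hext (M b)
  let u := Filter.hyperfilter B
  let U := (u : Filter _).Product fun b => M b
  have : U ⊨ S := ⟨fun φ hφ => (Ultraproduct.sentence_realize φ).2
    (Filter.Eventually.of_forall fun b => Theory.realize_sentence_of_mem S hφ)⟩
  -- `c = n̄` in `U` would force `b = n` for `u`-almost all `b`, but `u` is nonprincipal.
  let c : ∀ b, M b := fun b => succM^[b] zeroM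
  refine ⟨Theory.ModelType.of S U, (c : U), fun n hn => ?_,
    (Ultraproduct.realize_formula_cast _ fun _ => c).2 (Filter.Eventually.of_forall hM)⟩
  have hcn : ∀ᶠ b : B in u, (b : ℕ) = n :=
    ((Ultraproduct.realize_formula_cast (eqNum n) fun _ => c).1 ((realize_eqNum n _).2 hn)).mono
      fun b hb => iterate_succM_zeroM_injective ((realize_eqNum n _).1 hb)
  exact ((Set.finite_singleton n).preimage Subtype.val_injective.injOn).notMem_hyperfilter hcn

theorem finite_or_compl_finite_of_weaklyRep (hext : SuccMinus ⊆ S) {X : Set ℕ}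
    (hrep : WeaklyRep S X) : X.Finite ∨ Xᶜ.Finite := by
  obtain ⟨φ, hφ⟩ := hrep
  by_contra! hX
  obtain ⟨M, c, hc, hφc⟩ := exists_nonstandard_realize hext (boundaryFormula φ) <|
    (infinite_setOf_mem_and_add_one_notMem hX.1 hX.2).mono fun n hn => by
      obtain ⟨hn, hn1⟩ := hn
      rw [hφ, models_subst_numeral_iff] at hn
      rw [hφ, models_subst_numeral_iff, not_forall] at hn1
      obtain ⟨M, hM⟩ := hn1
      rw [Function.iterate_succ_apply'] at hM
      exact ⟨M, (realize_boundaryFormula φ _).2 ⟨hn M, hM⟩⟩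
  have := model_succMinus hext M
  obtain ⟨hφc, hφSc⟩ := (realize_boundaryFormula φ c).1 hφc
  exact hφSc ((realize_succM_iff_of_nonstandard hc φ).2 hφc)

end Theory

end SuccTheory

open SuccTheory in
/-- In any consistent extension of `Succ⁻`, a set is weakly representable iff it is finite or cofinite. -/
theorem weaklyRep_iff_finite_or_cofinite (S : succLang.Theory) (h : S.IsSatisfiable) (hext : SuccMinus ⊆ S)
  (X : Set ℕ) : WeaklyRep S X ↔ (X.Finite ∨ Xᶜ.Finite) :=
  ⟨finite_or_compl_finite_of_weaklyRep hext, weaklyRep_of_finite_or_compl_finite h hext⟩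
end
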